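/- Assume every real symmetric 9×9 matrix in M₂ (blocks symmetric, M_B=0, M_A=0) is LO-equivalent to a dd-matrix. Then every real symmetric 9×9 matrix N with N_B = 0 and N_A = 0 is LO-equivalent to a dd-matrix. (Proof: apply the hypothesis to M = N + N^{Γ_B} and use that (A,B)·N^{Γ_B} = ((A,B)·N)^{Γ_B}, so (A,B)·N and (A,B)·N^{Γ_B} share diagonal blocks.) -/
import Mathlib


noncomputable section

open Matrix Kronecker

/-- Sum of the three diagonal 3×3 blocks of a real 9×9 matrix. -/
def blockB (M : Matrix (Fin 3 × Fin 3) (Fin 3 × Fin 3) ℝ) : Matrix (Fin 3) (Fin 3) ℝ :=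
  Matrix.of fun a b => ∑ i : Fin 3, M (i, a) (i, b)

/-- The 3×3 matrix of traces of the 3×3 blocks of a real 9×9 matrix. -/
def blockA (M : Matrix (Fin 3 × Fin 3) (Fin 3 × Fin 3) ℝ) : Matrix (Fin 3) (Fin 3) ℝ :=
  Matrix.of fun i j => ∑ a : Fin 3, M (i, a) (j, a)

/-- A real 9×9 matrix is a dd-matrix if all diagonal 3×3 blocks are diagonal. -/
def IsDD (M : Matrix (Fin 3 × Fin 3) (Fin 3 × Fin 3) ℝ) : Prop :=
  ∀ i a b : Fin 3, a ≠ b → M (i, a) (i, b) = 0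

/-- The partial transpose w.r.t. the second (B) system: each 3×3 block is
replaced by its transpose. -/
def pt (M : Matrix (Fin 3 × Fin 3) (Fin 3 × Fin 3) ℝ) :
    Matrix (Fin 3 × Fin 3) (Fin 3 × Fin 3) ℝ :=
  Matrix.of fun p q => M (p.1, q.2) (q.1, p.2)

private def ptEquiv : ((Fin 3 × Fin 3) × (Fin 3 × Fin 3)) ≃ ((Fin 3 × Fin 3) × (Fin 3 × Fin 3)) where
  toFun x := ((x.1.1, x.2.2), (x.2.1, x.1.2))
  invFun x := ((x.1.1, x.2.2), (x.2.1, x.1.2))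
  left_inv _ := rfl
  right_inv _ := rfl

private lemma conj_pt (A B : Matrix (Fin 3) (Fin 3) ℝ)
    (N : Matrix (Fin 3 × Fin 3) (Fin 3 × Fin 3) ℝ) :
    (A ⊗ₖ B) * pt N * (A ⊗ₖ B)ᵀ = pt ((A ⊗ₖ B) * N * (A ⊗ₖ B)ᵀ) := by
  ext p q
  simp only [pt, Matrix.mul_apply, Matrix.transpose_apply, Matrix.kroneckerMap_apply,
    Matrix.of_apply, Finset.sum_mul, Finset.mul_sum]
  rw [← Finset.sum_product', ← Finset.sum_product', Finset.univ_product_univ]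
  exact Fintype.sum_equiv ptEquiv _ _ (fun x => by simp [ptEquiv]; ring)

theorem stmt18
    (h : ∀ M : Matrix (Fin 3 × Fin 3) (Fin 3 × Fin 3) ℝ, Mᵀ = M →
      blockB M = 0 → blockA M = 0 → pt M = M →
      ∃ A B : Matrix (Fin 3) (Fin 3) ℝ, A ∈ Matrix.orthogonalGroup (Fin 3) ℝ ∧
        B ∈ Matrix.orthogonalGroup (Fin 3) ℝ ∧ IsDD ((A ⊗ₖ B) * M * (A ⊗ₖ B)ᵀ)) :
    ∀ N : Matrix (Fin 3 × Fin 3) (Fin 3 × Fin 3) ℝ, Nᵀ = N →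
      blockB N = 0 → blockA N = 0 →
      ∃ A B : Matrix (Fin 3) (Fin 3) ℝ, A ∈ Matrix.orthogonalGroup (Fin 3) ℝ ∧
        B ∈ Matrix.orthogonalGroup (Fin 3) ℝ ∧ IsDD ((A ⊗ₖ B) * N * (A ⊗ₖ B)ᵀ) := by
  intro N hsym hB hA
  have hs : ∀ p q, N q p = N p q := fun p q => congrFun (congrFun hsym p) q
  have hB' : ∀ a b : Fin 3, (∑ i : Fin 3, N (i, a) (i, b)) = 0 := fun a b => by
    have := congrFun (congrFun hB a) b
    simpa [blockB] using this
  have hA' : ∀ i j : Fin 3, (∑ a : Fin 3, N (i, a) (j, a)) = 0 := fun i j => by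
    have := congrFun (congrFun hA i) j
    simpa [blockA] using this
  obtain ⟨A, B, hAo, hBo, hdd⟩ := h (N + pt N)
    (by
      ext p q
      simp only [Matrix.transpose_apply, Matrix.add_apply, pt, Matrix.of_apply]
      rw [hs, hs ((q.1, p.2)) ((p.1, q.2))])
    (by
      ext a b
      simp only [blockB, Matrix.of_apply, Matrix.add_apply, pt, Matrix.zero_apply,
        Finset.sum_add_distrib]
      rw [hB' a b]
      simp only [zero_add]
      rw [show (∑ i : Fin 3, N (i, b) (i, a)) = 0 from hB' b a])
    (by
      ext i j
      simp only [blockA, Matrix.of_apply, Matrix.add_apply, pt, Matrix.zero_apply,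
        Finset.sum_add_distrib]
      rw [hA' i j]
      simp [hA' i j])
    (by
      ext p q
      simp only [pt, Matrix.of_apply, Matrix.add_apply]
      ring)
  refine ⟨A, B, hAo, hBo, ?_⟩
  set P := (A ⊗ₖ B) * N * (A ⊗ₖ B)ᵀ with hP
  have hPs : ∀ p q, P q p = P p q := fun p q => by
    have : Pᵀ = P := by
      rw [hP, Matrix.transpose_mul, Matrix.transpose_mul, Matrix.transpose_transpose, hsym,
        Matrix.mul_assoc]
    exact congrFun (congrFun this p) q
  have key : (A ⊗ₖ B) * (N + pt N) * (A ⊗ₖ B)ᵀ = P + pt P := by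
    rw [Matrix.mul_add, Matrix.add_mul, conj_pt]
  intro i a b hab
  have h0 := hdd i a b hab
  rw [key] at h0
  simp only [Matrix.add_apply, pt, Matrix.of_apply] at h0
  have : P (i, a) (i, b) + P (i, a) (i, b) = 0 := by
    rw [← hPs (i, a) (i, b)] at h0 ⊢
    convert h0 using 2
  linarith
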